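/- Let G=(V,E) be a dilating contextuality scenario and let x ∈ V be a vertex such that some probabilistic model p₀ of G satisfies p₀(x) > 0. Then there exists a probabilistic model p of G with p(x) = 1. -/

import Mathlib

noncomputable section

structure HilbertC where
  carrier : Type
  [normed : NormedAddCommGroup carrier]
  [ips : InnerProductSpace ℂ carrier]
  [complete : CompleteSpace carrier]

attribute [instance] HilbertC.normed HilbertC.ips HilbertC.complete

/-- A positive operator representation of the hypergraph with edge set `E`. -/
def IsPOR {V : Type} [Fintype V] (E : Finset (Finset V)) {H : Type}
    [NormedAddCommGroup H] [InnerProductSpace ℂ H] [CompleteSpace H]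
    (A : V → H →L[ℂ] H) : Prop :=
  (∀ x, (A x).IsPositive) ∧ ∀ e ∈ E, ∑ x ∈ e, A x = 1

/-- A projective representation of the hypergraph with edge set `E`. -/
def IsPR {V : Type} [Fintype V] (E : Finset (Finset V)) {H : Type}
    [NormedAddCommGroup H] [InnerProductSpace ℂ H] [CompleteSpace H]
    (A : V → H →L[ℂ] H) : Prop :=
  (∀ x, IsSelfAdjoint (A x) ∧ IsIdempotentElem (A x)) ∧ ∀ e ∈ E, ∑ x ∈ e, A x = 1

/-- The POR `A` dilates to a projective representation. -/
def DilatesToPR {V : Type} [Fintype V] (E : Finset (Finset V)) {H : Type}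
    [NormedAddCommGroup H] [InnerProductSpace ℂ H] [CompleteSpace H]
    (A : V → H →L[ℂ] H) : Prop :=
  ∃ (K : HilbertC) (B : V → K.carrier →L[ℂ] K.carrier) (Vi : H →L[ℂ] K.carrier),
    IsPR E B ∧ Isometry Vi ∧
    ∀ x, A x = (ContinuousLinearMap.adjoint Vi).comp ((B x).comp Vi)

/-- The hypergraph `(V, E)` is dilating. -/
def Dilating (V : Type) [Fintype V] (E : Finset (Finset V)) : Prop :=
  ∀ (H : HilbertC) (A : V → H.carrier →L[ℂ] H.carrier), IsPOR E A → DilatesToPR E A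

/-- A probabilistic model of the hypergraph with edge set `E`. -/
def IsModel {V : Type} [Fintype V] (E : Finset (Finset V)) (p : V → ℝ) : Prop :=
  (∀ x, 0 ≤ p x ∧ p x ≤ 1) ∧ ∀ e ∈ E, ∑ x ∈ e, p x = 1


/-! Turn `p₀` into the scalar POR `y ↦ p₀ y • 1` on `ℂ` and dilate it to a PR `B` along an
isometry `V`. Then `⟪V 1, B x (V 1)⟫ = p₀ x ≠ 0`, so `B x (V 1) ≠ 0`; its normalization `u` is
fixed by `B x`, and the Born rule `y ↦ ‖B y u‖²` is a model taking the value `1` at `x`. -/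

open ContinuousLinearMap

theorem IsIdempotentElem.apply_apply {R M : Type*} [Semiring R] [TopologicalSpace M]
    [AddCommMonoid M] [Module R M] {P : M →L[R] M} (hP : IsIdempotentElem P) (w : M) :
    P (P w) = P w :=
  DFunLike.congr_fun hP.eq w

theorem IsStarProjection.inner_apply_self {𝕜 H : Type*} [RCLike 𝕜] [NormedAddCommGroup H]
    [InnerProductSpace 𝕜 H] [CompleteSpace H] {P : H →L[𝕜] H} (hP : IsStarProjection P)
    (w : H) : inner 𝕜 w (P w) = (‖P w‖ : 𝕜) ^ 2 := by
  calc inner 𝕜 w (P w) = inner 𝕜 w (P (P w)) := by rw [hP.isIdempotentElem.apply_apply]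
    _ = inner 𝕜 (P w) (P w) := by rw [← adjoint_inner_left, hP.isSelfAdjoint.adjoint_eq]
    _ = (‖P w‖ : 𝕜) ^ 2 := inner_self_eq_norm_sq_to_K _

section Representations

variable {V : Type} [Fintype V] {E : Finset (Finset V)} {H : Type}
  [NormedAddCommGroup H] [InnerProductSpace ℂ H] [CompleteSpace H]

theorem isPOR_smul_one_of_isModel {p : V → ℝ} (hp : IsModel E p) :
    IsPOR E (fun y => (p y : ℂ) • (1 : H →L[ℂ] H)) := by
  refine ⟨fun y => isPositive_one.smul_of_nonneg ?_, fun e he => ?_⟩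
  · exact_mod_cast (hp.1 y).1
  · rw [← Finset.sum_smul, ← Complex.ofReal_sum, hp.2 e he, Complex.ofReal_one, one_smul]

theorem IsPR.isStarProjection {B : V → H →L[ℂ] H} (hB : IsPR E B) (y : V) :
    IsStarProjection (B y) :=
  ⟨(hB.1 y).2, (hB.1 y).1⟩

theorem IsPR.isModel_norm_sq {B : V → H →L[ℂ] H} (hB : IsPR E B) {u : H} (hu : ‖u‖ = 1) :
    IsModel E (fun y => ‖B y u‖ ^ 2) := by
  refine ⟨fun y => ⟨sq_nonneg _, ?_⟩, fun e he => ?_⟩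
  · refine pow_le_one₀ (norm_nonneg _) ?_
    calc ‖B y u‖ ≤ ‖B y‖ * ‖u‖ := le_opNorm _ _
      _ ≤ 1 := by rw [hu, mul_one]; exact (hB.isStarProjection y).norm_le
  · suffices ((∑ y ∈ e, ‖B y u‖ ^ 2 : ℝ) : ℂ) = 1 by exact_mod_cast this
    calc ((∑ y ∈ e, ‖B y u‖ ^ 2 : ℝ) : ℂ) = ∑ y ∈ e, inner ℂ u (B y u) := by
          push_cast
          exact Finset.sum_congr rfl fun y _ =>
            ((hB.isStarProjection y).inner_apply_self u).symm
      _ = inner ℂ u ((∑ y ∈ e, B y) u) := by rw [sum_apply, inner_sum]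
      _ = 1 := by rw [hB.2 e he, one_apply_eq_self, inner_self_eq_norm_sq_to_K, hu]; norm_num

theorem IsPR.exists_isModel_eq_one {B : V → H →L[ℂ] H} (hB : IsPR E B) {x : V} {w : H}
    (hw : B x w ≠ 0) : ∃ p : V → ℝ, IsModel E p ∧ p x = 1 := by
  set u := (‖B x w‖⁻¹ : ℂ) • B x w
  have hu : ‖u‖ = 1 := by
    rw [norm_smul, norm_inv, Complex.norm_real, norm_norm, inv_mul_cancel₀ (norm_ne_zero_iff.2 hw)]
  have hBu : B x u = u := by
    rw [map_smul, (hB.isStarProjection x).isIdempotentElem.apply_apply]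
  exact ⟨_, hB.isModel_norm_sq hu, by rw [hBu, hu, one_pow]⟩

theorem DilatesToPR.exists_isModel_eq_one {A : V → H →L[ℂ] H} (hA : DilatesToPR E A) {x : V}
    {v : H} (hv : inner ℂ v (A x v) ≠ 0) : ∃ p : V → ℝ, IsModel E p ∧ p x = 1 := by
  obtain ⟨K, B, Vi, hB, -, hAB⟩ := hA
  refine hB.exists_isModel_eq_one (w := Vi v) fun h => hv ?_
  rw [hAB x, comp_apply, comp_apply, adjoint_inner_right, h, inner_zero_right]

end Representations

theorem stmt7_general (V : Type) [Fintype V]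
    (E : Finset (Finset V))
    (hdil : Dilating V E)
    (x : V) (p₀ : V → ℝ) (hp₀ : IsModel E p₀) (hx : 0 < p₀ x) :
    ∃ p : V → ℝ, IsModel E p ∧ p x = 1 := by
  refine (hdil ⟨ℂ⟩ _ (isPOR_smul_one_of_isModel hp₀)).exists_isModel_eq_one (v := (1 : ℂ)) ?_
  simpa [inner_smul_right] using hx.ne'

theorem stmt7 (V : Type) [Fintype V] [DecidableEq V]
    (E : Finset (Finset V)) (hEne : E.Nonempty) (hene : ∀ e ∈ E, e.Nonempty)
    (hcover : ∀ x : V, ∃ e ∈ E, x ∈ e)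
    (hdil : Dilating V E)
    (x : V) (p₀ : V → ℝ) (hp₀ : IsModel E p₀) (hx : 0 < p₀ x) :
    ∃ p : V → ℝ, IsModel E p ∧ p x = 1 :=
  stmt7_general V E hdil x p₀ hp₀ hx
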